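/- Similarity-based upper bound on the ĥμ-weighted second moment: for every k, t ∈ {0,…,T−1}, and s ∈ 𝒮, E_{A~ĥμ_t(·|s)}[(π^(k)_t(A|s)/ĥμ_t(A|s))² ĥq_{π^(k),t}(s,A)] ≤ sqrt(η̄_t/η̲_t) (Σ_{a∈𝒜} π^(k)_t(a|s) sqrt(ĥq_{π^(k),t}(s,a)))². -/
import Mathlib


open Finset

section RL

variable {S A : Type*}

/-- Expectation, over the random trajectory of length `h` generated from time `t` and state `s`
by the behavior policy `μ` in the MDP with transition kernel `p`, of a functional `f` of the
trajectory (recorded as the list of successive (action, next-state) pairs).  This is the finite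
sum over all trajectories weighted by their probabilities; trajectories of zero probability
contribute `0`. -/
noncomputable def Etraj [Fintype S] [Fintype A] (p : S → A → S → ℝ)
    (μ : ℕ → S → A → ℝ) : ℕ → ℕ → S → (List (A × S) → ℝ) → ℝ
  | 0, _, _, f => f []
  | h + 1, t, s, f =>
      ∑ a : A, ∑ s' : S,
        μ t s a * p s a s' * Etraj p μ h (t + 1) s' (fun l => f ((a, s') :: l))

/-- Total (undiscounted) reward `Σ_i R_{i+1}` along a trajectory starting from state `s`. -/
noncomputable def retF (r : S → A → ℝ) : S → List (A × S) → ℝ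
  | _, [] => 0
  | s, (a, s') :: l => r s a + retF r s' l

/-- The PDIS return `G^PDIS(τ^{μ_{t:T-1}}_{t:T-1}) = Σ_i (∏_{j=t}^i ρ^{π,μ}_j) R_{i+1}` of a
trajectory starting at time `t` in state `s`, with target policy `π` and behavior policy `μ`,
in its recursive form. -/
noncomputable def pdisF (r : S → A → ℝ) (π μ : ℕ → S → A → ℝ) :
    ℕ → S → List (A × S) → ℝ
  | _, _, [] => 0
  | t, s, (a, s') :: l => π t s a / μ t s a * (r s a + pdisF r π μ (t + 1) s' l)

/-- State value function `v_{π,t}(s) = E_π[Σ_{i=t+1}^T R_i | S_t = s]` for horizon `T`. -/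
noncomputable def vval [Fintype S] [Fintype A] (p : S → A → S → ℝ) (r : S → A → ℝ)
    (π : ℕ → S → A → ℝ) (T t : ℕ) (s : S) : ℝ :=
  Etraj p π (T - t) t s (retF r s)

/-- Action value function `q_{π,t}(s,a) = E_π[Σ_{i=t+1}^T R_i | S_t = s, A_t = a]`. -/
noncomputable def qval [Fintype S] [Fintype A] (p : S → A → S → ℝ) (r : S → A → ℝ)
    (π : ℕ → S → A → ℝ) (T t : ℕ) (s : S) (a : A) : ℝ :=
  r s a + ∑ s' : S, p s a s' * vval p r π T (t + 1) s'

/-- Conditional expectation `E[G^PDIS(τ^{μ_{t:T-1}}_{t:T-1}) | S_t = s]`. -/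
noncomputable def Epdis [Fintype S] [Fintype A] (p : S → A → S → ℝ) (r : S → A → ℝ)
    (π μ : ℕ → S → A → ℝ) (T t : ℕ) (s : S) : ℝ :=
  Etraj p μ (T - t) t s (pdisF r π μ t s)

/-- Conditional variance `V(G^PDIS(τ^{μ_{t:T-1}}_{t:T-1}) | S_t = s)`. -/
noncomputable def Vpdis [Fintype S] [Fintype A] (p : S → A → S → ℝ) (r : S → A → ℝ)
    (π μ : ℕ → S → A → ℝ) (T t : ℕ) (s : S) : ℝ :=
  Etraj p μ (T - t) t s (fun l => pdisF r π μ t s l ^ 2) - Epdis p r π μ T t s ^ 2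

/-- `ν_{π,t}(s,a) = V_{S'~p(·|s,a)}(v_{π,t+1}(S'))` for `t ≤ T-2`, and `ν_{π,T-1}(s,a) = 0`. -/
noncomputable def nuval [Fintype S] [Fintype A] (p : S → A → S → ℝ) (r : S → A → ℝ)
    (π : ℕ → S → A → ℝ) (T t : ℕ) (s : S) (a : A) : ℝ :=
  if t = T - 1 then 0
  else (∑ s' : S, p s a s' * vval p r π T (t + 1) s' ^ 2)
       - (∑ s' : S, p s a s' * vval p r π T (t + 1) s') ^ 2

/-- The variance-augmented action value `ĥq_{π,t}(s,a)`:
`ĥq_{π,T-1}(s,a) = q_{π,T-1}(s,a)²` and, for `t ≤ T-2`,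
`ĥq_{π,t}(s,a) = q_{π,t}(s,a)² + ν_{π,t}(s,a) + Σ_{s'} p(s'|s,a) V(G^PDIS(τ^{π_{t+1:T-1}}) | S_{t+1}=s')`. -/
noncomputable def hq [Fintype S] [Fintype A] (p : S → A → S → ℝ) (r : S → A → ℝ)
    (π : ℕ → S → A → ℝ) (T t : ℕ) (s : S) (a : A) : ℝ :=
  if t = T - 1 then qval p r π T t s a ^ 2
  else qval p r π T t s a ^ 2 + nuval p r π T t s a
       + ∑ s' : S, p s a s' * Vpdis p r π π T (t + 1) s'

/-- The tailored behavior policy `ĥμ_t(a|s) ∝ sqrt(Σ_k π^(k)_t(a|s)² ĥq_{π^(k),t}(s,a))`,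
normalized over `a ∈ 𝒜` (uniform on `𝒜` if all the weights vanish). -/
noncomputable def hmu [Fintype S] [Fintype A] (p : S → A → S → ℝ) (r : S → A → ℝ)
    (K : ℕ) (π : Fin K → ℕ → S → A → ℝ) (T t : ℕ) (s : S) (a : A) : ℝ :=
  if (∑ b : A, Real.sqrt (∑ k : Fin K, π k t s b ^ 2 * hq p r (π k) T t s b)) = 0 then
    (Fintype.card A : ℝ)⁻¹
  else
    Real.sqrt (∑ k : Fin K, π k t s a ^ 2 * hq p r (π k) T t s a) /
      ∑ b : A, Real.sqrt (∑ k : Fin K, π k t s b ^ 2 * hq p r (π k) T t s b)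

/-- `w^(k)_t(s,a) = π^(k)_t(a|s)² ĥq_{π^(k),t}(s,a)`. -/
noncomputable def wRL [Fintype S] [Fintype A] (p : S → A → S → ℝ) (r : S → A → ℝ)
    (K : ℕ) (π : Fin K → ℕ → S → A → ℝ) (T : ℕ) (k : Fin K) (t : ℕ) (s : S) (a : A) : ℝ :=
  π k t s a ^ 2 * hq p r (π k) T t s a

/-- `η^(k)_t(s,a) = w^(k)_t(s,a) / w̄_t(s,a)` with `w̄_t(s,a) = (1/K) Σ_j w^(j)_t(s,a)`. -/
noncomputable def etaRL [Fintype S] [Fintype A] (p : S → A → S → ℝ) (r : S → A → ℝ)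
    (K : ℕ) (π : Fin K → ℕ → S → A → ℝ) (T : ℕ) (k : Fin K) (t : ℕ) (s : S) (a : A) : ℝ :=
  wRL p r K π T k t s a / ((∑ j : Fin K, wRL p r K π T j t s a) / K)

/-- `η̲_t = min_{k,s,a} η^(k)_t(s,a)`. -/
noncomputable def etaLoRL [Fintype S] [Fintype A] (p : S → A → S → ℝ) (r : S → A → ℝ)
    (K : ℕ) (π : Fin K → ℕ → S → A → ℝ) (T t : ℕ) : ℝ :=
  ⨅ x : Fin K × S × A, etaRL p r K π T x.1 t x.2.1 x.2.2

/-- `η̄_t = max_{k,s,a} η^(k)_t(s,a)`. -/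
noncomputable def etaHiRL [Fintype S] [Fintype A] (p : S → A → S → ℝ) (r : S → A → ℝ)
    (K : ℕ) (π : Fin K → ℕ → S → A → ℝ) (T t : ℕ) : ℝ :=
  ⨆ x : Fin K × S × A, etaRL p r K π T x.1 t x.2.1 x.2.2

end RL

/-- similarity-based upper bound on the `ĥμ`-weighted second moment: for every
`k`, `t ∈ {0,…,T-1}` and state `s`,
`E_{A~ĥμ_t(·|s)}[(π^(k)_t(A|s)/ĥμ_t(A|s))² ĥq_{π^(k),t}(s,A)]
  ≤ sqrt(η̄_t/η̲_t) (Σ_a π^(k)_t(a|s) sqrt(ĥq_{π^(k),t}(s,a)))²`. -/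
theorem stmt17 {S A : Type*} [Fintype S] [Fintype A] [Nonempty S] [Nonempty A]
    (p : S → A → S → ℝ) (r : S → A → ℝ)
    (hp0 : ∀ s a s', 0 ≤ p s a s') (hp1 : ∀ s a, ∑ s' : S, p s a s' = 1)
    (T : ℕ) (hT : 1 ≤ T)
    (K : ℕ) (hK : 0 < K) (π : Fin K → ℕ → S → A → ℝ)
    (hπ : ∀ k t s, t < T → (∀ a, 0 ≤ π k t s a) ∧ (∑ a : A, π k t s a = 1))
    (hwbar : ∀ t, t < T → ∀ (s : S) (a : A),
      0 < (∑ j : Fin K, wRL p r K π T j t s a) / K)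
    (hlo : ∀ t, t < T → 0 < etaLoRL p r K π T t)
    (k : Fin K) (t : ℕ) (ht : t < T) (s : S) :
    ∑ a : A, hmu p r K π T t s a *
        ((π k t s a / hmu p r K π T t s a) ^ 2 * hq p r (π k) T t s a)
      ≤ Real.sqrt (etaHiRL p r K π T t / etaLoRL p r K π T t) *
          (∑ a : A, π k t s a * Real.sqrt (hq p r (π k) T t s a)) ^ 2 := by
  classical
  haveI : Nonempty (Fin K) := Fin.pos_iff_nonempty.mp hK
  have hKpos : (0 : ℝ) < K := by exact_mod_cast hK
  have hηlo : 0 < etaLoRL p r K π T t := hlo t ht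
  have hwpos : ∀ (j : Fin K) (a : A), 0 < wRL p r K π T j t s a := by
    intro j a
    have hbar := hwbar t ht s a
    have hη : etaLoRL p r K π T t ≤ etaRL p r K π T j t s a :=
      ciInf_le (Finite.bddBelow_range _) (⟨j, s, a⟩ : Fin K × S × A)
    have hpos : 0 < etaRL p r K π T j t s a := lt_of_lt_of_le hηlo hη
    have h2 := mul_pos hpos hbar
    rwa [etaRL, div_mul_cancel₀ _ (ne_of_gt hbar)] at h2
  have hηbd : ∀ (j : Fin K) (a : A),
      etaLoRL p r K π T t ≤ etaRL p r K π T j t s a ∧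
      etaRL p r K π T j t s a ≤ etaHiRL p r K π T t := by
    intro j a
    refine ⟨ciInf_le (Finite.bddBelow_range _) (⟨j, s, a⟩ : Fin K × S × A), ?_⟩
    exact le_ciSup (f := fun x : Fin K × S × A => etaRL p r K π T x.1 t x.2.1 x.2.2)
      (Finite.bddAbove_range _) ⟨j, s, a⟩
  set W : A → ℝ := fun a => ∑ j : Fin K, π j t s a ^ 2 * hq p r (π j) T t s a with hWdef
  have hWw : ∀ a, W a = ∑ j : Fin K, wRL p r K π T j t s a := by
    intro a; simp only [hWdef, wRL]
  have hWpos : ∀ a, 0 < W a := by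
    intro a
    rw [hWw]
    exact Finset.sum_pos (fun j _ => hwpos j a) Finset.univ_nonempty
  set D : ℝ := ∑ b : A, Real.sqrt (W b) with hDdef
  have hDpos : 0 < D :=
    Finset.sum_pos (fun b _ => Real.sqrt_pos.mpr (hWpos b)) Finset.univ_nonempty
  have hmu_eq : ∀ a, hmu p r K π T t s a = Real.sqrt (W a) / D := by
    intro a
    unfold hmu
    rw [if_neg (ne_of_gt hDpos)]
  have hrel : ∀ a, etaRL p r K π T k t s a = K * wRL p r K π T k t s a / W a := by
    intro a
    rw [etaRL, ← hWw a]
    field_simp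
  set wk : A → ℝ := fun a => wRL p r K π T k t s a with hwkdef
  have hwkpos : ∀ a, 0 < wk a := fun a => hwpos k a
  have hLHS : ∑ a : A, hmu p r K π T t s a *
        ((π k t s a / hmu p r K π T t s a) ^ 2 * hq p r (π k) T t s a)
      = D * ∑ a : A, wk a / Real.sqrt (W a) := by
    rw [Finset.mul_sum]
    refine Finset.sum_congr rfl fun a _ => ?_
    rw [hmu_eq a]
    have hx : (0 : ℝ) < Real.sqrt (W a) := Real.sqrt_pos.mpr (hWpos a)
    have hwka : wk a = π k t s a ^ 2 * hq p r (π k) T t s a := rfl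
    rw [hwka]
    field_simp
  rw [hLHS]
  have hqpos : ∀ a, 0 < hq p r (π k) T t s a := by
    intro a
    have h := hwpos k a
    rw [wRL] at h
    nlinarith [sq_nonneg (π k t s a)]
  have hsw : ∀ a, Real.sqrt (wk a) = π k t s a * Real.sqrt (hq p r (π k) T t s a) := by
    intro a
    have hwka : wk a = π k t s a ^ 2 * hq p r (π k) T t s a := rfl
    rw [hwka, Real.sqrt_mul (sq_nonneg _), Real.sqrt_sq ((hπ k t s ht).1 a)]
  have hA : ∀ a, wk a / Real.sqrt (W a) ≤
      Real.sqrt (etaHiRL p r K π T t / K) * Real.sqrt (wk a) := by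
    intro a
    have hratio : wk a / W a = etaRL p r K π T k t s a / K := by
      rw [hrel a, hwkdef]
      field_simp [ne_of_gt (hWpos a)]
    have h1 : wk a / Real.sqrt (W a) = Real.sqrt (wk a / W a) * Real.sqrt (wk a) := by
      rw [Real.sqrt_div (le_of_lt (hwkpos a)), div_mul_eq_mul_div,
        Real.mul_self_sqrt (le_of_lt (hwkpos a))]
    rw [h1, hratio]
    refine mul_le_mul_of_nonneg_right ?_ (Real.sqrt_nonneg _)
    refine Real.sqrt_le_sqrt ?_
    gcongr
    exact (hηbd k a).2
  have hB : ∀ a, Real.sqrt (W a) ≤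
      Real.sqrt (K / etaLoRL p r K π T t) * Real.sqrt (wk a) := by
    intro a
    have hηa : 0 < etaRL p r K π T k t s a := lt_of_lt_of_le hηlo (hηbd k a).1
    have hWeq : W a = K * wk a / etaRL p r K π T k t s a := by
      rw [eq_div_iff (ne_of_gt hηa), hrel a, hwkdef]
      field_simp
      exact mul_div_cancel_left₀ _ (ne_of_gt (hWpos a))
    have hWle : W a ≤ K / etaLoRL p r K π T t * wk a := by
      rw [hWeq, div_mul_eq_mul_div]
      gcongr
      · exact le_of_lt (mul_pos hKpos (hwkpos a))
      · exact (hηbd k a).1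
    calc Real.sqrt (W a) ≤ Real.sqrt (K / etaLoRL p r K π T t * wk a) :=
          Real.sqrt_le_sqrt hWle
      _ = Real.sqrt (K / etaLoRL p r K π T t) * Real.sqrt (wk a) :=
          Real.sqrt_mul (by positivity) _
  set Ssum : ℝ := ∑ a : A, Real.sqrt (wk a) with hSdef
  have hsum1 : D ≤ Real.sqrt (K / etaLoRL p r K π T t) * Ssum := by
    rw [hSdef, Finset.mul_sum]
    exact Finset.sum_le_sum fun b _ => hB b
  have hsum2 : ∑ a : A, wk a / Real.sqrt (W a) ≤
      Real.sqrt (etaHiRL p r K π T t / K) * Ssum := by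
    rw [hSdef, Finset.mul_sum]
    exact Finset.sum_le_sum fun a _ => hA a
  have h2nn : 0 ≤ ∑ a : A, wk a / Real.sqrt (W a) :=
    Finset.sum_nonneg fun a _ => div_nonneg (le_of_lt (hwkpos a)) (Real.sqrt_nonneg _)
  have hfin : D * (∑ a : A, wk a / Real.sqrt (W a)) ≤
      (Real.sqrt (K / etaLoRL p r K π T t) * Ssum) *
        (Real.sqrt (etaHiRL p r K π T t / K) * Ssum) :=
    mul_le_mul hsum1 hsum2 h2nn (by positivity)
  refine le_trans hfin (le_of_eq ?_)
  have hS : Ssum = ∑ a : A, π k t s a * Real.sqrt (hq p r (π k) T t s a) := by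
    rw [hSdef]
    exact Finset.sum_congr rfl fun a _ => hsw a
  rw [← hS]
  have hsqrt : Real.sqrt (K / etaLoRL p r K π T t) * Real.sqrt (etaHiRL p r K π T t / K)
      = Real.sqrt (etaHiRL p r K π T t / etaLoRL p r K π T t) := by
    rw [← Real.sqrt_mul (by positivity)]
    congr 1
    field_simp
  rw [← hsqrt]
  ring
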